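/- (Consequence of Theorem 1: replayed messages cannot cause a stale commit.) In the Byzcuit object transition system, suppose the execution contains an abort step Step (Locked T sT) (abort T sT) (Active (sT + 1)). Then every commit step occurring later in the execution carries a transaction sequence number strictly greater than sT: if Active (sT + 1) →* Locked T' sT' and Step (Locked T' sT') (commit T' sT') (Inactive T'), then sT' > sT. Hence no ACCEPT message assembled from messages recorded at or before the abort (all of which carry sequence numbers at most sT) can ever cause the object to be committed. -/

import Mathlib

/-- States of the life cycle of a single Byzcuit object. -/
inductive ObjState : Type where
  | Active : ℕ → ObjState
  | Locked : ℕ → ℕ → ObjState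
  | Inactive : ℕ → ObjState
deriving DecidableEq

/-- Labels of the transitions: lock, commit and abort, each carrying a
transaction `T` and a transaction sequence number `sT`. -/
inductive Label : Type where
  | lock : ℕ → ℕ → Label
  | commit : ℕ → ℕ → Label
  | abort : ℕ → ℕ → Label
deriving DecidableEq

/-- The step relation of the Byzcuit object transition system, generated by
exactly three rules. -/
inductive Step : ObjState → Label → ObjState → Prop where
  | lock {s T sT : ℕ} (h : sT ≥ s) :
      Step (.Active s) (.lock T sT) (.Locked T sT)
  | commit {T sT : ℕ} :
      Step (.Locked T sT) (.commit T sT) (.Inactive T)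
  | abort {T sT : ℕ} :
      Step (.Locked T sT) (.abort T sT) (.Active (sT + 1))

/-- Reachability by zero or more steps (labels existentially quantified). -/
inductive Reach : ObjState → ObjState → Prop where
  | refl (σ : ObjState) : Reach σ σ
  | tail {σ σ' σ'' : ObjState} (h : Reach σ σ') (ℓ : Label)
      (hs : Step σ' ℓ σ'') : Reach σ σ''

/-- The invariant behind the theorem: sequence numbers never decrease, since a lock needs
`sT ≥ s` and an abort resumes at `sT + 1`. -/
def ObjState.SeqGE (n : ℕ) : ObjState → Prop
  | .Active s => n ≤ s
  | .Locked _ s => n ≤ s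
  | .Inactive _ => True

theorem Step.seqGE {n : ℕ} {σ σ' : ObjState} {ℓ : Label} (hs : Step σ ℓ σ')
    (h : σ.SeqGE n) : σ'.SeqGE n := by
  cases hs with
  | lock hge => exact h.trans hge
  | commit => trivial
  | abort => exact Nat.le_succ_of_le h

theorem Reach.seqGE {n : ℕ} {σ σ' : ObjState} (h : Reach σ σ') (h0 : σ.SeqGE n) :
    σ'.SeqGE n := by
  induction h with
  | refl => exact h0
  | tail _ _ hs ih => exact hs.seqGE ih

theorem no_stale_commit_after_abort_general (sT : ℕ) :
    ∀ (T' sT' : ℕ),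
      Reach (.Active (sT + 1)) (.Locked T' sT') →
      Step (.Locked T' sT') (.commit T' sT') (.Inactive T') →
      sT' > sT := by
  intro T' sT' hreach _
  exact hreach.seqGE (n := sT + 1) le_rfl

/-- **Replayed messages cannot cause a stale commit (consequence of Theorem 1).**
If the execution contains the abort step of a transaction with sequence number
`sT`, then every commit step occurring later carries a transaction sequence
number strictly greater than `sT`. -/
theorem no_stale_commit_after_abort (T sT : ℕ)
    (habort : Step (.Locked T sT) (.abort T sT) (.Active (sT + 1))) :
    ∀ (T' sT' : ℕ),
      Reach (.Active (sT + 1)) (.Locked T' sT') →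
      Step (.Locked T' sT') (.commit T' sT') (.Inactive T') →
      sT' > sT :=
  no_stale_commit_after_abort_general sT
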